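/- Let 𝓔 := {(e_1, e_2) ∈ ℝ² : e_1 ≤ e_2} and Ω^{𝓔,1} := 𝓔 × C_0^1. Define Φ: Ω^{𝓔,1} → C^𝓔 by Φ_t(e_1, e_2; x) := (e_1 + x(t), e_2 ∨ max_{0 ≤ s ≤ t}(e_1 + x(s))). Then Φ is an updating function; that is: (1) Φ_0(e_1, e_2; x) = (e_1, e_2) for all (e_1, e_2) ∈ 𝓔 and x ∈ C_0^1; (2) the stopped path ∇(Φ(e_1, e_2; x), t) equals ∇(Φ(e_1, e_2; ∇(x,t)), t) for all t ≥ 0; and (3) Θ(Φ(e_1, e_2; x), t) = Φ(Φ_t(e_1, e_2; x), Δ(x,t)) for all t ≥ 0, (e_1, e_2) ∈ 𝓔 and x ∈ C_0^1. -/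

import Mathlib

open MeasureTheory Filter Set
open scoped ENNReal NNReal Topology

noncomputable section

namespace Mimic

/-- Lebesgue measure on `[0,∞)`, modeled as `ℝ≥0`. -/
def leb : Measure ℝ≥0 := (volume : Measure ℝ).comap (↑·)

variable (E : Type*) [MeasurableSpace E] (V : Type*) [NormedAddCommGroup V]

/-- The space `C_0` of continuous paths `[0,∞) → V` vanishing at `0`, with the
topology of uniform convergence on compact sets (compact-open topology). -/
def C0 : Type _ := {x : C(ℝ≥0, V) // x 0 = 0}

instance : TopologicalSpace (C0 V) := inferInstanceAs (TopologicalSpace {x : C(ℝ≥0, V) // x 0 = 0})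
instance : MeasurableSpace (C0 V) := borel _
instance : BorelSpace (C0 V) := ⟨rfl⟩

variable {E V}

/-- The value of a path in `C0` at time `t`. -/
def C0.eval (x : C0 V) (t : ℝ≥0) : V := x.1 t

/-- The stopping operator `∇(x,t) := x(· ∧ t)` on continuous maps. -/
def stopCM (x : C(ℝ≥0, V)) (t : ℝ≥0) : C(ℝ≥0, V) :=
  x.comp ⟨fun s => min s t, continuous_id.min continuous_const⟩

/-- The stopping operator on `C0`. -/
def stop0 (x : C0 V) (t : ℝ≥0) : C0 V :=
  ⟨stopCM x.1 t, by
    simp only [stopCM, ContinuousMap.comp_apply, ContinuousMap.coe_mk]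
    rw [min_eq_left (zero_le (a := t))]
    exact x.2⟩

/-- The difference operator `Δ(x,t) := x(t+·) − x(t)`, valued in `C0`. -/
def delta (x : C(ℝ≥0, V)) (t : ℝ≥0) : C0 V :=
  ⟨⟨fun s => x (t + s) - x t,
    ((x.continuous.comp (continuous_const.add continuous_id)).sub continuous_const)⟩,
    by simp⟩

/-- The shift operator `Θ(x,t) := x(t+·)` for `t ≥ 0`. -/
def shiftCM {α : Type*} [TopologicalSpace α] (x : C(ℝ≥0, α)) (t : ℝ≥0) : C(ℝ≥0, α) :=
  x.comp ⟨fun s => t + s, continuous_const.add continuous_id⟩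

lemma continuous_stop0 (t : ℝ≥0) : Continuous (fun x : C0 V => stop0 x t) := by
  apply Continuous.subtype_mk
  exact (ContinuousMap.continuous_precomp _).comp continuous_subtype_val

variable (E V)

/-- The canonical space `Ω^{𝓔,d} = 𝓔 × C_0`, with σ-field `𝔈 ⊗ σ(X)`. -/
abbrev OmegaEd : Type _ := E × C0 V

/-- The map `ω = (e,x) ↦ (e, x(·∧t))`. -/
def stopPair (t : ℝ≥0) : OmegaEd E V → OmegaEd E V := fun ω => (ω.1, stop0 ω.2 t)

lemma measurable_stopPair (t : ℝ≥0) : Measurable (stopPair E V t) :=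
  measurable_fst.prodMk (((continuous_stop0 (V := V) t).measurable).comp measurable_snd)

/-- The canonical filtration `F_t^{𝓔,d} := 𝔈 ⊗ σ(X^t)` on `Ω^{𝓔,d}`. -/
def FF : Filtration ℝ≥0 (inferInstance : MeasurableSpace (OmegaEd E V)) where
  seq t := MeasurableSpace.comap (stopPair E V t) inferInstance
  mono' := by
    intro s t hst
    have hcomp : stopPair E V s = (stopPair E V s) ∘ (stopPair E V t) := by
      funext ω
      simp only [Function.comp_apply, stopPair, stop0, stopCM]
      refine Prod.ext rfl (Subtype.ext (ContinuousMap.ext fun u => ?_))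
      simp only [ContinuousMap.comp_apply, ContinuousMap.coe_mk]
      rw [min_eq_left ((min_le_right u s).trans hst)]
    calc MeasurableSpace.comap (stopPair E V s) inferInstance
        = MeasurableSpace.comap (stopPair E V t)
            (MeasurableSpace.comap (stopPair E V s) inferInstance) := by
          nth_rewrite 1 [hcomp]
          exact MeasurableSpace.comap_comp.symm
      _ ≤ MeasurableSpace.comap (stopPair E V t) inferInstance :=
          MeasurableSpace.comap_mono
            (measurable_iff_comap_le.mp (measurable_stopPair E V s))
  le' t := measurable_iff_comap_le.mp (measurable_stopPair E V t)

variable {E V}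

/-- The σ-field `σ(Δ(X,T))` generated by the increments of the coordinate
process after the random time `T`. -/
def sigmaDelta (T : OmegaEd E V → ℝ≥0) : MeasurableSpace (OmegaEd E V) :=
  MeasurableSpace.comap (fun ω => delta ω.2.1 (T ω)) inferInstance

/-- The σ-field `σ(Δ(X^{T'},T))` generated by the increments of the coordinate
process stopped at `T'` after the random time `T`. -/
def sigmaDeltaStopped (T' T : OmegaEd E V → ℝ≥0) : MeasurableSpace (OmegaEd E V) :=
  MeasurableSpace.comap (fun ω => delta (stop0 ω.2 (T' ω)).1 (T ω)) inferInstance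

end Mimic

namespace Mimic
/-- Measures on the canonical space `Ω^{𝓔,d}` with respect to the canonical
product σ-field `F^{𝓔,d} = 𝔈 ⊗ σ(X)` (this abbreviation pins down the
σ-field, so that it is unaffected by local σ-field variables). -/
abbrev OmegaMeasure (E : Type*) [MeasurableSpace E] (V : Type*) [NormedAddCommGroup V] :
    Type _ :=
  @Measure (OmegaEd E V) Prod.instMeasurableSpace
end Mimic

namespace Mimic

/-- The maximum-to-date updating formula
`Φ_t(e₁,e₂; x) = (e₁ + x(t), e₂ ∨ max_{0≤s≤t}(e₁ + x(s)))`. -/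
def maxUpdate (e : ℝ × ℝ) (x : C0 ℝ) (t : ℝ≥0) : ℝ × ℝ :=
  (e.1 + x.1 t, max e.2 (sSup ((fun s => e.1 + x.1 s) '' Set.Iic t)))

end Mimic

/-!
The running maximum over `[0, t + s]` is the larger of the running maximum over `[0, t]` and the
maximum over `[t, t + s]`, and the latter is the running maximum of the restarted path
`e₁ + x(t) + Δ(x,t)`; this is the flow property (3). Property (2) holds because `Φ_s` only reads
`x` on `[0, s]`, and the running maximum is continuous since near a fixed time it is a supremum
of a jointly continuous function over one fixed compact interval.
-/

section RunningSup

variable {α β : Type*} [LinearOrder α] [ConditionallyCompleteLinearOrder β]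

theorem sSup_image_Iic_eq_max {f : α → β} {a b : α} (hab : a ≤ b)
    (hf : BddAbove (f '' Iic b)) :
    sSup (f '' Iic b) = max (sSup (f '' Iic a)) (sSup (f '' Icc a b)) := by
  rw [← Iic_union_Icc_eq_Iic hab, image_union] at hf ⊢
  exact csSup_union (hf.mono subset_union_left) (nonempty_Iic.image f)
    (hf.mono subset_union_right) ((nonempty_Icc.2 hab).image f)

variable [OrderBot α] [TopologicalSpace α] [CompactIccSpace α] [TopologicalSpace β]
  [OrderTopology β]

omit [ConditionallyCompleteLinearOrder β] [TopologicalSpace β] [OrderTopology β] in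
theorem isCompact_Iic_of_orderBot (a : α) : IsCompact (Iic a) := by
  simpa only [Icc_bot] using isCompact_Icc (a := (⊥ : α)) (b := a)

theorem Continuous.bddAbove_image_Iic {f : α → β} (hf : Continuous f) (a : α) :
    BddAbove (f '' Iic a) :=
  ((isCompact_Iic_of_orderBot a).image hf).bddAbove

theorem Continuous.sSup_image_Iic [OrderTopology α] [NoMaxOrder α] {f : α → β}
    (hf : Continuous f) : Continuous fun t => sSup (f '' Iic t) := by
  refine continuous_iff_continuousAt.2 fun t₀ => ?_
  obtain ⟨b, hb⟩ := exists_gt t₀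
  have hstopped : Continuous fun t => sSup ((fun u => f (min u t)) '' Iic b) :=
    (isCompact_Iic_of_orderBot b).continuous_sSup (hf.comp (continuous_snd.min continuous_fst))
  refine hstopped.continuousAt.congr ?_
  filter_upwards [Iic_mem_nhds hb] with t (ht : t ≤ b)
  congr 1
  ext y
  constructor
  · rintro ⟨u, -, rfl⟩
    exact ⟨min u t, min_le_right u t, rfl⟩
  · rintro ⟨u, hu, rfl⟩
    exact ⟨u, (mem_Iic.1 hu).trans ht, congrArg f (min_eq_left hu)⟩

end RunningSup

theorem Set.image_const_add_Iic_eq_Icc {M : Type*} [AddCommMonoid M] [PartialOrder M]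
    [IsOrderedCancelAddMonoid M] [CanonicallyOrderedAdd M] (a b : M) :
    (a + ·) '' Iic b = Icc a (a + b) := by
  have hIic : Iic b = Icc 0 b := by
    ext
    simp
  rw [hIic, image_const_add_Icc, add_zero]

namespace Mimic

section MaxUpdate

variable (e : ℝ × ℝ) (x : C0 ℝ)

theorem continuous_const_add_C0 : Continuous fun s => e.1 + x.1 s :=
  continuous_const.add x.1.continuous

theorem maxUpdate_fst_le_snd (t : ℝ≥0) : (maxUpdate e x t).1 ≤ (maxUpdate e x t).2 :=
  le_max_of_le_right <| le_csSup ((continuous_const_add_C0 e x).bddAbove_image_Iic t)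
    (mem_image_of_mem _ (mem_Iic.2 le_rfl))

theorem continuous_maxUpdate : Continuous (maxUpdate e x) :=
  (continuous_const_add_C0 e x).prodMk
    (continuous_const.max (continuous_const_add_C0 e x).sSup_image_Iic)

theorem maxUpdate_zero (he : e.1 ≤ e.2) : maxUpdate e x 0 = e := by
  have hIic : Iic (0 : ℝ≥0) = {0} := Iic_bot
  simp only [maxUpdate, hIic, image_singleton, csSup_singleton, x.2, add_zero, max_eq_left he]

theorem maxUpdate_stop0 {s t : ℝ≥0} (hst : s ≤ t) :
    maxUpdate e (stop0 x t) s = maxUpdate e x s := by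
  have hstop : ∀ u ≤ t, (stop0 x t).1 u = x.1 u := fun u hu => congrArg x.1 (min_eq_left hu)
  simp only [maxUpdate, hstop s hst,
    image_congr fun u (hu : u ∈ Iic s) => congrArg (e.1 + ·) (hstop u (hu.trans hst))]

theorem maxUpdate_add (t s : ℝ≥0) :
    maxUpdate e x (t + s) = maxUpdate (maxUpdate e x t) (delta x.1 t) s := by
  have hdelta : ∀ u, e.1 + x.1 t + (delta x.1 t).1 u = e.1 + x.1 (t + u) := fun u => by
    simp only [delta, ContinuousMap.coe_mk]
    ring
  have hincrements : (fun u => e.1 + x.1 t + (delta x.1 t).1 u) '' Iic s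
      = (fun u => e.1 + x.1 u) '' Icc t (t + s) := by
    rw [← image_const_add_Iic_eq_Icc, ← image_comp]
    exact image_congr fun u _ => hdelta u
  refine Prod.ext (hdelta s).symm ?_
  simp only [maxUpdate, hincrements]
  rw [sSup_image_Iic_eq_max le_self_add ((continuous_const_add_C0 e x).bddAbove_image_Iic _),
    max_assoc]

end MaxUpdate

/-- **Example (Maximum-to-date).** On `𝓔 = {(e₁,e₂) ∈ ℝ² : e₁ ≤ e₂}`, the map
`Φ_t(e₁,e₂; x) = (e₁ + x(t), e₂ ∨ max_{0≤s≤t}(e₁ + x(s)))` is an updating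
function: it takes values in `𝓔`, has continuous paths, and satisfies
(1) `Φ_0(e,x) = e`, (2) `∇(Φ(e,x),t) = ∇(Φ(e,∇(x,t)),t)`, and
(3) `Θ(Φ(e,x),t) = Φ(Φ_t(e,x), Δ(x,t))` for all `t ≥ 0`. -/
theorem maxUpdate_is_updating_function :
    ∀ e : ℝ × ℝ, e.1 ≤ e.2 → ∀ x : C0 ℝ,
      -- `Φ` maps into `C^𝓔` for `𝓔 = {(e₁,e₂) : e₁ ≤ e₂}` …
      (∀ t : ℝ≥0, (maxUpdate e x t).1 ≤ (maxUpdate e x t).2) ∧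
      -- … and its paths are continuous
      Continuous (fun t => maxUpdate e x t) ∧
      -- (1) `Φ_0(e₁,e₂; x) = (e₁,e₂)`
      maxUpdate e x 0 = e ∧
      -- (2) `∇(Φ(e,x),t) = ∇(Φ(e,∇(x,t)),t)` for all `t ≥ 0`
      (∀ t s : ℝ≥0, maxUpdate e x (min s t) = maxUpdate e (stop0 x t) (min s t)) ∧
      -- (3) `Θ(Φ(e,x),t) = Φ(Φ_t(e,x), Δ(x,t))` for all `t ≥ 0`
      (∀ t s : ℝ≥0, maxUpdate e x (t + s) = maxUpdate (maxUpdate e x t) (delta x.1 t) s) := by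
  intro e he x
  exact ⟨maxUpdate_fst_le_snd e x, continuous_maxUpdate e x, maxUpdate_zero e x he,
    fun t s => (maxUpdate_stop0 e x (min_le_right s t)).symm, maxUpdate_add e x⟩


end Mimic
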